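/- arXiv:2505.06230 — 5 statements merged into one kernel-verified Lean document; each statement's English description precedes it below -/
import Mathlib

section
/- Let Z = W be the 2×2 nilpotent Jordan block (with 1 in the (1,2) entry and 0 elsewhere), scaled by any t with 0 < t < 1 so that ‖Z‖ < 1 and ZW = WZ = 0. For the polynomial f(z,w) = z + w, one has ‖f(Z,W)‖ = 2t, while the supremum of |z + w| over the cross {(z,w) ∈ 𝔻² : zw = 0} equals 1. Hence the spectral constant of the quantum cross is at least 2. -/
/-!
The 2×2 Jordan block `J` is a rank-one matrix unit, so `‖J‖ = 1` and `J² = 0`. Hence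
`Z = W = t J` is a point of the quantum cross with `‖Z + W‖ = 2t`, whereas on the scalar cross
one of `z, w` vanishes and `|z + w| < 1`, with supremum `1`.
-/

open Matrix

section MatrixUnit

variable {𝕜 n : Type*} [RCLike 𝕜] [Fintype n] [DecidableEq n]

lemma Matrix.toEuclideanCLM_single_apply (i j : n) (c : 𝕜) (x : EuclideanSpace 𝕜 n) :
    toEuclideanCLM (n := n) (𝕜 := 𝕜) (single i j c) x = PiLp.single 2 i (c * x j) := by
  ext k
  rw [ofLp_toEuclideanCLM, single_mulVec_eq]
  simp [Pi.single_apply]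

lemma Matrix.norm_toEuclideanCLM_single (i j : n) (c : 𝕜) :
    ‖toEuclideanCLM (n := n) (𝕜 := 𝕜) (single i j c)‖ = ‖c‖ := by
  refine le_antisymm (ContinuousLinearMap.opNorm_le_bound _ (norm_nonneg c) fun x ↦ ?_) ?_
  · rw [toEuclideanCLM_single_apply, PiLp.norm_single, norm_mul]
    exact mul_le_mul_of_nonneg_left (PiLp.norm_apply_le x j) (norm_nonneg c)
  · simpa [toEuclideanCLM_single_apply] using
      (toEuclideanCLM (n := n) (𝕜 := 𝕜) (single i j c)).le_opNorm (PiLp.single 2 j 1)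

lemma Matrix.toEuclideanCLM_single_mul_self {i j : n} (hij : i ≠ j) (c : 𝕜) :
    toEuclideanCLM (n := n) (𝕜 := 𝕜) (single i j c) *
      toEuclideanCLM (n := n) (𝕜 := 𝕜) (single i j c) = 0 := by
  rw [← map_mul]
  simp [hij.symm]

end MatrixUnit

lemma RCLike.sSup_norm_add_of_mul_eq_zero {𝕜 : Type*} [RCLike 𝕜] :
    sSup {x : ℝ | ∃ z w : 𝕜, ‖z‖ < 1 ∧ ‖w‖ < 1 ∧ z * w = 0 ∧ x = ‖z + w‖} = 1 := by
  suffices {x : ℝ | ∃ z w : 𝕜, ‖z‖ < 1 ∧ ‖w‖ < 1 ∧ z * w = 0 ∧ x = ‖z + w‖} = Set.Ico 0 1 by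
    rw [this, csSup_Ico zero_lt_one]
  ext x
  constructor
  · rintro ⟨z, w, hz, hw, hzw, rfl⟩
    rcases mul_eq_zero.mp hzw with rfl | rfl <;> simp [hz, hw]
  · rintro ⟨hx0, hx1⟩
    exact ⟨x, 0, by simpa [abs_of_nonneg hx0], by simp, by simp, by simp [abs_of_nonneg hx0]⟩

lemma jordanBlock_two_eq_single :
    (of ![![0, 1], ![0, 0]] : Matrix (Fin 2) (Fin 2) ℂ) = single 0 1 1 := by
  ext i j
  fin_cases i <;> fin_cases j <;> rfl

/-- With `Z = W = t • J` where `J` is the 2×2 nilpotent Jordan block and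
`0 < t < 1`, one has `‖Z‖ < 1`, `ZW = WZ = 0`, `‖f(Z,W)‖ = ‖Z + W‖ = 2t` for
`f(z,w) = z + w`, while the supremum of `|z + w|` over the cross
`{(z,w) ∈ 𝔻² : zw = 0}` equals `1`; hence the spectral constant of the quantum cross
(the sup over such pairs of the ratio) is at least `2`. -/
theorem stmt0 (t : ℝ) (ht0 : 0 < t) (ht1 : t < 1) :
    ∀ Z W : EuclideanSpace ℂ (Fin 2) →L[ℂ] EuclideanSpace ℂ (Fin 2),
      Z = (t : ℂ) • Matrix.toEuclideanCLM (𝕜 := ℂ) (Matrix.of ![![0, 1], ![0, 0]]) →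
      W = Z →
      (‖Z‖ < 1 ∧ ‖W‖ < 1 ∧ Z * W = 0 ∧ W * Z = 0 ∧
      ‖Z + W‖ = 2 * t ∧
      sSup {x : ℝ | ∃ z w : ℂ, ‖z‖ < 1 ∧ ‖w‖ < 1 ∧ z * w = 0 ∧ x = ‖z + w‖} = 1 ∧
      ‖Z + W‖ /
        sSup {x : ℝ | ∃ z w : ℂ, ‖z‖ < 1 ∧ ‖w‖ < 1 ∧ z * w = 0 ∧ x = ‖z + w‖}
        = 2 * t) := by
  rintro _ _ rfl rfl
  rw [jordanBlock_two_eq_single]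
  set J := toEuclideanCLM (n := Fin 2) (𝕜 := ℂ) (single 0 1 1)
  have hJ : ‖J‖ = 1 := by simp [J, norm_toEuclideanCLM_single]
  have hnorm : ‖(t : ℂ) • J‖ = t := by simp [norm_smul, hJ, abs_of_pos ht0]
  have hsq : ((t : ℂ) • J) * ((t : ℂ) • J) = 0 := by
    rw [smul_mul_smul_comm, toEuclideanCLM_single_mul_self zero_ne_one]
    ext
    simp
  have hsum : ‖(t : ℂ) • J + (t : ℂ) • J‖ = 2 * t := by
    rw [← two_smul ℂ, smul_smul, norm_smul, hJ]
    norm_cast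
    simp [abs_of_pos ht0]
  rw [RCLike.sSup_norm_add_of_mul_eq_zero, hnorm, hsum, div_one]
  exact ⟨ht1, ht1, hsq, hsq, rfl, rfl, rfl⟩
end

section
/- Let f(z,w) = Σ over (m,n) with mn = 0 of a_{m,n} zᵐ wⁿ be a Laurent-type expansion on the conservative hyperbola H_r = {(z,w) ∈ 𝔻² : zw = 1/r²} for r > 1, induced from a Laurent series F(ζ) = Σ_{k∈ℤ} c_k ζᵏ on the annulus {1/r < |ζ| < r} via z = ζ/r, w = 1/(rζ). Writing f(z,w) = f⁺(z)·z + a₀ + w·f⁻(w), the functions f⁺ and f⁻ are holomorphic on 𝔻 and satisfy ‖f⁺(z)z + a₀‖_𝔻 ≤ r²/(r²−1) · ‖f‖_{H_r} and ‖w f⁻(w) + a₀‖_𝔻 ≤ r²/(r²−1) · ‖f‖_{H_r}, where ‖f‖_{H_r} is the supremum of |f| on H_r. -/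
/-!
Cauchy estimates on the circles `‖ζ‖ = s` give `‖c k‖ s ^ k ≤ M` for `1 / r ≤ s ≤ r`. So the
regular part `G ζ = ∑_{k ≥ 0} c k ζ ^ k` is holomorphic on `‖ζ‖ < r`, and on a circle `‖ζ‖ = t`
inside the annulus it differs from `F` by the principal part, which the estimates at `s = 1 / r`
bound by the geometric series `M ρ / (t - ρ)` (`ρ = 1 / r`). The maximum principle and `t → r`
give `‖G‖ ≤ r / (r - 1 / r) * M = r² / (r² - 1) * M`, and `f⁺(z) z + c₀ = G (r z)`. The inversion
`ζ ↦ ζ⁻¹` preserves the annulus and exchanges `f⁺` and `f⁻`.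
-/

open Metric Complex Filter Set Topology Real MeasureTheory

theorem hasSum_circleIntegral_of_norm_le {ι E : Type*} [Countable ι] [NormedAddCommGroup E]
    [NormedSpace ℂ E] {f : ι → ℂ → E} {g : ℂ → E} {c : ℂ} {R : ℝ} {u : ι → ℝ}
    (hf : ∀ i, CircleIntegrable (f i) c R) (hu : Summable u)
    (hfu : ∀ i, ∀ z ∈ sphere c |R|, ‖f i z‖ ≤ u i)
    (hfg : ∀ z ∈ sphere c |R|, HasSum (f · z) (g z)) :
    HasSum (fun i ↦ ∮ z in C(c, R), f i z) (∮ z in C(c, R), g z) := by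
  refine intervalIntegral.hasSum_integral_of_dominated_convergence (fun i _ ↦ |R| * u i)
    (fun i ↦ (hf i).out.def'.aestronglyMeasurable) (fun i ↦ ae_of_all _ fun θ _ ↦ ?_)
    (ae_of_all _ fun _ _ ↦ hu.mul_left |R|) intervalIntegrable_const
    (ae_of_all _ fun θ _ ↦ (hfg _ (circleMap_mem_sphere' c R θ)).const_smul _)
  simpa [norm_smul] using
    mul_le_mul_of_nonneg_left (hfu i _ (circleMap_mem_sphere' c R θ)) (abs_nonneg R)

theorem circleIntegral_zpow_eq_ite {s : ℝ} (hs : 0 < s) (n : ℤ) :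
    (∮ z in C(0, s), z ^ n) = if n = -1 then 2 * π * I else 0 := by
  split_ifs with hn
  · simpa [hn] using circleIntegral.integral_sub_inv_of_mem_ball (c := 0) (w := 0) (by simpa)
  · simpa using circleIntegral.integral_sub_zpow_of_ne hn 0 0 s

theorem circleIntegral_div_zpow_add_one_eq {c : ℤ → ℂ} {F : ℂ → ℂ} {s : ℝ} (hs : 0 < s)
    (hsum : ∀ ζ ∈ sphere (0 : ℂ) s, HasSum (fun k ↦ c k * ζ ^ k) (F ζ)) (k : ℤ) :
    (∮ ζ in C(0, s), F ζ / ζ ^ (k + 1)) = 2 * π * I * c k := by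
  have hnorm : ∀ ζ ∈ sphere (0 : ℂ) s, ‖ζ‖ = s := fun ζ hζ ↦ by simpa using hζ
  have hne : ∀ ζ ∈ sphere (0 : ℂ) s, ζ ≠ 0 := fun ζ hζ ↦
    norm_ne_zero_iff.1 (by rw [hnorm ζ hζ]; exact hs.ne')
  have habs : Summable fun j ↦ ‖c j‖ * s ^ j := by
    simpa [norm_mul, norm_zpow, abs_of_pos hs] using
      summable_norm_iff.2 (hsum s (by simp [hs.le])).summable
  have hterm : HasSum (fun j ↦ ∮ ζ in C(0, s), c j * ζ ^ (j - (k + 1)))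
      (∮ ζ in C(0, s), F ζ / ζ ^ (k + 1)) := by
    refine hasSum_circleIntegral_of_norm_le (u := fun j ↦ ‖c j‖ * s ^ j / s ^ (k + 1))
      (fun j ↦ ?_) (habs.div_const _) (fun j ζ hζ ↦ ?_) (fun ζ hζ ↦ ?_)
    · exact (continuousOn_const.mul (continuousOn_id.zpow₀ _ fun ζ hζ ↦ Or.inl (hne ζ hζ))
        ).circleIntegrable hs.le
    · rw [abs_of_pos hs] at hζ
      rw [norm_mul, norm_zpow, hnorm ζ hζ, zpow_sub₀ hs.ne', mul_div_assoc]
    · rw [abs_of_pos hs] at hζ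
      simpa only [mul_div_assoc, ← zpow_sub₀ (hne ζ hζ)] using (hsum ζ hζ).div_const (ζ ^ (k + 1))
  refine hterm.unique ?_
  convert hasSum_single k (fun j hj ↦ ?_) using 1
  · rw [circleIntegral.integral_const_mul, circleIntegral_zpow_eq_ite hs, if_pos (by ring)]
    ring
  · rw [circleIntegral.integral_const_mul, circleIntegral_zpow_eq_ite hs, if_neg (by omega),
      mul_zero]

theorem norm_coeff_mul_zpow_le_of_sphere {c : ℤ → ℂ} {F : ℂ → ℂ} {s M : ℝ} (hs : 0 < s)
    (hsum : ∀ ζ ∈ sphere (0 : ℂ) s, HasSum (fun k ↦ c k * ζ ^ k) (F ζ))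
    (hM : ∀ ζ ∈ sphere (0 : ℂ) s, ‖F ζ‖ ≤ M) (k : ℤ) :
    ‖c k‖ * s ^ k ≤ M := by
  have hbound := circleIntegral.norm_integral_le_of_norm_le_const hs.le (c := 0)
    (f := fun ζ ↦ F ζ / ζ ^ (k + 1)) (C := M / s ^ (k + 1)) fun ζ hζ ↦ by
      rw [norm_div, norm_zpow, show ‖ζ‖ = s by simpa using hζ]
      exact div_le_div_of_nonneg_right (hM ζ hζ) (by positivity)
  have hlhs : ‖2 * π * I * c k‖ = 2 * π * ‖c k‖ := by simp [pi_pos.le]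
  have hrhs : 2 * π * s * (M / s ^ (k + 1)) = 2 * π * (M / s ^ k) := by
    rw [zpow_add_one₀ hs.ne']; field_simp
  rw [circleIntegral_div_zpow_add_one_eq hs hsum, hlhs, hrhs,
    mul_le_mul_iff_right₀ (by positivity)] at hbound
  exact (le_div_iff₀ (zpow_pos hs k)).1 hbound

theorem norm_mul_pow_le_of_norm_mul_pow_le {a w : ℂ} {R M t : ℝ} {k : ℕ}
    (ha : ‖a‖ * R ^ k ≤ M) (hR : 0 < R) (hw : ‖w‖ ≤ t) : ‖a * w ^ k‖ ≤ M * (t / R) ^ k := by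
  have ht : 0 ≤ t := (norm_nonneg w).trans hw
  calc ‖a * w ^ k‖ = ‖a‖ * ‖w‖ ^ k := by rw [norm_mul, norm_pow]
    _ ≤ ‖a‖ * t ^ k := by gcongr
    _ = ‖a‖ * R ^ k * (t / R) ^ k := by rw [div_pow]; field_simp
    _ ≤ M * (t / R) ^ k := by gcongr

theorem summable_mul_pow {a : ℕ → ℂ} {R M : ℝ} {z : ℂ} (ha : ∀ k, ‖a k‖ * R ^ k ≤ M)
    (hz : ‖z‖ < R) : Summable fun k ↦ a k * z ^ k := by
  have hR : 0 < R := (norm_nonneg z).trans_lt hz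
  exact .of_norm_bounded
    ((summable_geometric_of_lt_one (by positivity) ((div_lt_one hR).2 hz)).mul_left M)
    fun k ↦ norm_mul_pow_le_of_norm_mul_pow_le (ha k) hR le_rfl

theorem differentiableOn_tsum_mul_pow {a : ℕ → ℂ} {R M : ℝ} (ha : ∀ k, ‖a k‖ * R ^ k ≤ M) :
    DifferentiableOn ℂ (fun z ↦ ∑' k, a k * z ^ k) (ball 0 R) := by
  intro z hz
  rw [mem_ball_zero_iff] at hz
  obtain ⟨t, hzt, htR⟩ := exists_between hz
  have ht : 0 ≤ t := (norm_nonneg z).trans hzt.le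
  have hR : 0 < R := ht.trans_lt htR
  have hdiff : DifferentiableOn ℂ (fun z ↦ ∑' k, a k * z ^ k) (ball 0 t) :=
    differentiableOn_tsum_of_summable_norm
      ((summable_geometric_of_lt_one (div_nonneg ht hR.le) ((div_lt_one hR).2 htR)).mul_left M)
      (fun k ↦ by fun_prop) isOpen_ball
      fun k w hw ↦ norm_mul_pow_le_of_norm_mul_pow_le (ha k) hR (mem_ball_zero_iff.1 hw).le
  exact (hdiff.differentiableAt
    (isOpen_ball.mem_nhds (mem_ball_zero_iff.2 hzt))).differentiableWithinAt

theorem HasSum.coeff_neg_mul_zpow {c : ℤ → ℂ} {a ζ : ℂ} (h : HasSum (fun k : ℤ ↦ c k * ζ⁻¹ ^ k) a) :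
    HasSum (fun k : ℤ ↦ c (-k) * ζ ^ k) a := by
  rw [← (Equiv.neg ℤ).hasSum_iff]
  simpa [Function.comp_def, zpow_neg, inv_zpow] using h

section Annulus

variable {c : ℤ → ℂ} {F : ℂ → ℂ} {ρ R M : ℝ}

theorem norm_coeff_mul_zpow_le (hρ : 0 < ρ) (hρR : ρ < R)
    (hsum : ∀ ζ : ℂ, ρ < ‖ζ‖ → ‖ζ‖ < R → HasSum (fun k : ℤ ↦ c k * ζ ^ k) (F ζ))
    (hM : ∀ ζ : ℂ, ρ < ‖ζ‖ → ‖ζ‖ < R → ‖F ζ‖ ≤ M) (k : ℤ) {s : ℝ} (hs : s ∈ Icc ρ R) :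
    ‖c k‖ * s ^ k ≤ M := by
  refine le_on_closure (f := fun s : ℝ ↦ ‖c k‖ * s ^ k) (s := Ioo ρ R) (fun s hs ↦ ?_) ?_
    continuousOn_const (by rwa [closure_Ioo hρR.ne])
  · have hsphere : ∀ ζ ∈ sphere (0 : ℂ) s, ρ < ‖ζ‖ ∧ ‖ζ‖ < R := fun ζ hζ ↦ by
      simpa [mem_sphere_zero_iff_norm.1 hζ] using hs
    exact norm_coeff_mul_zpow_le_of_sphere (hρ.trans hs.1)
      (fun ζ hζ ↦ hsum ζ (hsphere ζ hζ).1 (hsphere ζ hζ).2)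
      (fun ζ hζ ↦ hM ζ (hsphere ζ hζ).1 (hsphere ζ hζ).2) k
  · rw [closure_Ioo hρR.ne]
    exact continuousOn_const.mul
      (continuousOn_id.zpow₀ k fun s hs ↦ Or.inl (hρ.trans_le hs.1).ne')

theorem norm_coeff_mul_pow_le (hρ : 0 < ρ) (hρR : ρ < R)
    (hsum : ∀ ζ : ℂ, ρ < ‖ζ‖ → ‖ζ‖ < R → HasSum (fun k : ℤ ↦ c k * ζ ^ k) (F ζ))
    (hM : ∀ ζ : ℂ, ρ < ‖ζ‖ → ‖ζ‖ < R → ‖F ζ‖ ≤ M) (k : ℕ) :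
    ‖c k‖ * R ^ k ≤ M := by
  simpa using norm_coeff_mul_zpow_le hρ hρR hsum hM k (right_mem_Icc.2 hρR.le)

theorem norm_tsum_coeff_mul_pow_le_of_mem_annulus (hρ : 0 < ρ) (hρR : ρ < R)
    (hsum : ∀ ζ : ℂ, ρ < ‖ζ‖ → ‖ζ‖ < R → HasSum (fun k : ℤ ↦ c k * ζ ^ k) (F ζ))
    (hM : ∀ ζ : ℂ, ρ < ‖ζ‖ → ‖ζ‖ < R → ‖F ζ‖ ≤ M) {ζ : ℂ} (h₁ : ρ < ‖ζ‖) (h₂ : ‖ζ‖ < R) :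
    ‖∑' k : ℕ, c k * ζ ^ k‖ ≤ ‖ζ‖ / (‖ζ‖ - ρ) * M := by
  have ht : 0 < ‖ζ‖ := hρ.trans h₁
  obtain ⟨hpos, hneg⟩ :=
    summable_int_iff_summable_nat_and_neg_add_zero.1 (hsum ζ h₁ h₂).summable
  have hsplit := (tsum_of_nat_of_neg_add_one (f := fun k : ℤ ↦ c k * ζ ^ k) hpos hneg).symm.trans
    (hsum ζ h₁ h₂).tsum_eq
  simp only [zpow_natCast] at hsplit
  have hgeom : HasSum (fun n : ℕ ↦ M * (ρ / ‖ζ‖) ^ (n + 1)) (ρ / (‖ζ‖ - ρ) * M) := by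
    have hq : ρ / ‖ζ‖ < 1 := (div_lt_one ht).2 h₁
    have h := (hasSum_geometric_of_lt_one (by positivity) hq).mul_left (M * (ρ / ‖ζ‖))
    rwa [show M * (ρ / ‖ζ‖) * (1 - ρ / ‖ζ‖)⁻¹ = ρ / (‖ζ‖ - ρ) * M by
        rw [one_sub_div ht.ne']; field_simp,
      show (fun n : ℕ ↦ M * (ρ / ‖ζ‖) * (ρ / ‖ζ‖) ^ n) = fun n ↦ M * (ρ / ‖ζ‖) ^ (n + 1) from
        funext fun n ↦ by ring] at h
  have htail : ‖∑' n : ℕ, c (-(n + 1)) * ζ ^ (-((n : ℤ) + 1))‖ ≤ ρ / (‖ζ‖ - ρ) * M := by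
    refine tsum_of_norm_bounded hgeom fun n ↦ ?_
    have hc := norm_coeff_mul_zpow_le hρ hρR hsum hM (-(n + 1)) (left_mem_Icc.2 hρR.le)
    have hpow : ∀ x : ℝ, x ^ (-((n : ℤ) + 1)) = (x ^ (n + 1))⁻¹ := fun x ↦ by
      rw [← Nat.cast_succ, zpow_neg, zpow_natCast]
    calc ‖c (-(n + 1)) * ζ ^ (-((n : ℤ) + 1))‖
        = ‖c (-(n + 1))‖ * ρ ^ (-((n : ℤ) + 1)) * (ρ / ‖ζ‖) ^ (n + 1) := by
          rw [norm_mul, norm_zpow, hpow, hpow, div_pow]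
          field_simp
      _ ≤ M * (ρ / ‖ζ‖) ^ (n + 1) := by gcongr
  calc ‖∑' k : ℕ, c k * ζ ^ k‖
      = ‖F ζ - ∑' n : ℕ, c (-(n + 1)) * ζ ^ (-((n : ℤ) + 1))‖ := by
        rw [← hsplit, add_sub_cancel_right]
    _ ≤ ‖F ζ‖ + ‖∑' n : ℕ, c (-(n + 1)) * ζ ^ (-((n : ℤ) + 1))‖ := norm_sub_le _ _
    _ ≤ M + ρ / (‖ζ‖ - ρ) * M := add_le_add (hM ζ h₁ h₂) htail
    _ = ‖ζ‖ / (‖ζ‖ - ρ) * M := by field_simp [(sub_pos.2 h₁).ne']; ring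

theorem norm_tsum_coeff_mul_pow_le (hρ : 0 < ρ) (hρR : ρ < R)
    (hsum : ∀ ζ : ℂ, ρ < ‖ζ‖ → ‖ζ‖ < R → HasSum (fun k : ℤ ↦ c k * ζ ^ k) (F ζ))
    (hM : ∀ ζ : ℂ, ρ < ‖ζ‖ → ‖ζ‖ < R → ‖F ζ‖ ≤ M) {z : ℂ} (hz : ‖z‖ < R) :
    ‖∑' k : ℕ, c k * z ^ k‖ ≤ R / (R - ρ) * M := by
  have hG : DifferentiableOn ℂ (fun ζ ↦ ∑' k : ℕ, c k * ζ ^ k) (ball 0 R) :=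
    differentiableOn_tsum_mul_pow (norm_coeff_mul_pow_le hρ hρR hsum hM)
  have hcircle : ∀ t ∈ Ioo (max ρ ‖z‖) R, ‖∑' k : ℕ, c k * z ^ k‖ ≤ t / (t - ρ) * M := by
    rintro t ⟨hzt, htR⟩
    rw [max_lt_iff] at hzt
    have ht : 0 < t := hρ.trans hzt.1
    refine Complex.norm_le_of_forall_mem_frontier_norm_le isBounded_ball
      ((hG.mono (closure_ball (0 : ℂ) ht.ne' ▸ closedBall_subset_ball htR)).diffContOnCl)
      (fun ζ hζ ↦ ?_) (subset_closure (mem_ball_zero_iff.2 hzt.2))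
    rw [frontier_ball 0 ht.ne', mem_sphere_zero_iff_norm] at hζ
    rw [← hζ] at hzt htR ⊢
    exact norm_tsum_coeff_mul_pow_le_of_mem_annulus hρ hρR hsum hM hzt.1 htR
  have hlim : Tendsto (fun t ↦ t / (t - ρ) * M) (𝓝[<] R) (𝓝 (R / (R - ρ) * M)) :=
    ((continuousAt_id.div (continuousAt_id.sub continuousAt_const)
      (sub_pos.2 hρR).ne').mul continuousAt_const).tendsto.mono_left nhdsWithin_le_nhds
  exact ge_of_tendsto hlim (eventually_of_mem (Ioo_mem_nhdsLT (max_lt hρR hz)) hcircle)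

end Annulus

/-- The function `f⁺`; `f⁻` is `plusPart (fun k ↦ c (-k)) r`. -/
noncomputable def plusPart (c : ℤ → ℂ) (r : ℝ) (z : ℂ) : ℂ :=
  ∑' k : ℕ, c (k + 1) * (r : ℂ) ^ (k + 1) * z ^ k

section Hyperbola

variable {c : ℤ → ℂ} {F : ℂ → ℂ} {r M : ℝ}

theorem one_div_lt_self_of_one_lt (hr : 1 < r) : 1 / r < r :=
  ((div_lt_one (zero_lt_one.trans hr)).2 hr).trans hr

theorem differentiableOn_plusPart (hr : 1 < r)
    (hsum : ∀ ζ : ℂ, 1 / r < ‖ζ‖ → ‖ζ‖ < r → HasSum (fun k : ℤ ↦ c k * ζ ^ k) (F ζ))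
    (hM : ∀ ζ : ℂ, 1 / r < ‖ζ‖ → ‖ζ‖ < r → ‖F ζ‖ ≤ M) :
    DifferentiableOn ℂ (plusPart c r) (ball 0 1) :=
  differentiableOn_tsum_mul_pow fun k ↦ by
    simpa [abs_of_pos (zero_lt_one.trans hr)] using
      norm_coeff_mul_pow_le (by positivity) (one_div_lt_self_of_one_lt hr) hsum hM (k + 1)

theorem plusPart_mul_add_eq (hr : 1 < r)
    (hsum : ∀ ζ : ℂ, 1 / r < ‖ζ‖ → ‖ζ‖ < r → HasSum (fun k : ℤ ↦ c k * ζ ^ k) (F ζ))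
    (hM : ∀ ζ : ℂ, 1 / r < ‖ζ‖ → ‖ζ‖ < r → ‖F ζ‖ ≤ M) {z : ℂ} (hz : ‖z‖ < 1) :
    plusPart c r z * z + c 0 = ∑' k : ℕ, c k * (r * z) ^ k := by
  have hr₀ : 0 < r := zero_lt_one.trans hr
  have hsummable : Summable fun k : ℕ ↦ c k * (r * z) ^ k := by
    simp_rw [mul_pow, ← mul_assoc]
    exact summable_mul_pow (R := 1) (M := M) (fun k ↦ by
      simpa [abs_of_pos hr₀] using
        norm_coeff_mul_pow_le (by positivity) (one_div_lt_self_of_one_lt hr) hsum hM k)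
      (by simpa using hz)
  rw [hsummable.tsum_eq_zero_add, plusPart, ← tsum_mul_right]
  push_cast
  simp only [pow_zero, mul_one, pow_succ, mul_pow]
  rw [add_comm]
  congr 1
  exact tsum_congr fun k ↦ by ring

theorem norm_plusPart_mul_add_le (hr : 1 < r)
    (hsum : ∀ ζ : ℂ, 1 / r < ‖ζ‖ → ‖ζ‖ < r → HasSum (fun k : ℤ ↦ c k * ζ ^ k) (F ζ))
    (hM : ∀ ζ : ℂ, 1 / r < ‖ζ‖ → ‖ζ‖ < r → ‖F ζ‖ ≤ M) {z : ℂ} (hz : ‖z‖ < 1) :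
    ‖plusPart c r z * z + c 0‖ ≤ r ^ 2 / (r ^ 2 - 1) * M := by
  have hr₀ : 0 < r := zero_lt_one.trans hr
  have hrz : ‖(r : ℂ) * z‖ < r := by
    simpa [abs_of_pos hr₀] using mul_lt_mul_of_pos_left hz hr₀
  have hconst : r / (r - 1 / r) = r ^ 2 / (r ^ 2 - 1) := by field_simp
  rw [plusPart_mul_add_eq hr hsum hM hz, ← hconst]
  exact norm_tsum_coeff_mul_pow_le (by positivity) (one_div_lt_self_of_one_lt hr) hsum hM hrz

theorem norm_inv_mem_Ioo_one_div {ζ : ℂ} (h : ‖ζ‖ ∈ Ioo (1 / r) r) :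
    ‖ζ⁻¹‖ ∈ Ioo (1 / r) r := by
  have hr₀ : 0 < r := (norm_nonneg ζ).trans_lt h.2
  have hζ : 0 < ‖ζ‖ := (by positivity : (0 : ℝ) < 1 / r).trans h.1
  rw [norm_inv]
  refine ⟨one_div r ▸ inv_strictAnti₀ hζ h.2, ?_⟩
  simpa using inv_strictAnti₀ (by positivity) h.1

end Hyperbola

open Metric in
/-- Splitting on the conservative hyperbola. Let `r > 1` and let
`F(ζ) = Σ_{k ∈ ℤ} c_k ζ^k` be a Laurent series on the annulus `1/r < |ζ| < r`, bounded
by `M` there (so `M` plays the role of `‖f‖_{H_r}` under `z = ζ/r`, `w = 1/(rζ)`).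
Define `f⁺(z) = Σ_{k ≥ 1} c_k r^k z^{k-1}` and `f⁻(w) = Σ_{k ≥ 1} c_{-k} r^k w^{k-1}`.
Then `f⁺`, `f⁻` are holomorphic on the unit disk and
`‖f⁺(z) z + c₀‖_𝔻 ≤ r²/(r²-1) · M` and `‖w f⁻(w) + c₀‖_𝔻 ≤ r²/(r²-1) · M`. -/
theorem stmt3 (r M : ℝ) (hr : 1 < r) (c : ℤ → ℂ) (F : ℂ → ℂ)
    (hsum : ∀ ζ : ℂ, 1 / r < ‖ζ‖ → ‖ζ‖ < r →
      HasSum (fun k : ℤ => c k * ζ ^ k) (F ζ))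
    (hM : ∀ ζ : ℂ, 1 / r < ‖ζ‖ → ‖ζ‖ < r → ‖F ζ‖ ≤ M) :
    DifferentiableOn ℂ
      (fun z : ℂ => ∑' k : ℕ, c (k + 1) * (r : ℂ) ^ (k + 1) * z ^ k) (ball 0 1) ∧
    DifferentiableOn ℂ
      (fun w : ℂ => ∑' k : ℕ, c (-(k + 1 : ℕ)) * (r : ℂ) ^ (k + 1) * w ^ k) (ball 0 1) ∧
    (∀ z : ℂ, ‖z‖ < 1 →
      ‖(∑' k : ℕ, c (k + 1) * (r : ℂ) ^ (k + 1) * z ^ k) * z + c 0‖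
        ≤ r ^ 2 / (r ^ 2 - 1) * M) ∧
    (∀ w : ℂ, ‖w‖ < 1 →
      ‖w * (∑' k : ℕ, c (-(k + 1 : ℕ)) * (r : ℂ) ^ (k + 1) * w ^ k) + c 0‖
        ≤ r ^ 2 / (r ^ 2 - 1) * M) := by
  have hsum' : ∀ ζ : ℂ, 1 / r < ‖ζ‖ → ‖ζ‖ < r →
      HasSum (fun k : ℤ ↦ c (-k) * ζ ^ k) (F ζ⁻¹) := fun ζ h₁ h₂ ↦
    have h := norm_inv_mem_Ioo_one_div ⟨h₁, h₂⟩
    (hsum _ h.1 h.2).coeff_neg_mul_zpow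
  have hM' : ∀ ζ : ℂ, 1 / r < ‖ζ‖ → ‖ζ‖ < r → ‖F ζ⁻¹‖ ≤ M := fun ζ h₁ h₂ ↦
    have h := norm_inv_mem_Ioo_one_div ⟨h₁, h₂⟩
    hM _ h.1 h.2
  refine ⟨differentiableOn_plusPart hr hsum hM, differentiableOn_plusPart hr hsum' hM',
    fun z hz ↦ norm_plusPart_mul_add_le hr hsum hM hz, fun w hw ↦ ?_⟩
  rw [mul_comm]
  exact norm_plusPart_mul_add_le hr hsum' hM' hw
end

section
/- Let r > 1, let (Z, W) be bounded operators on a Hilbert space with ZW = WZ = r⁻²·I and ‖Z‖, ‖W‖ ≤ 1, and suppose additionally that U := (r/(r + 1/r))·(Z + W*) is unitary. Then for any polynomial (or convergent Laurent-type series) f(z,w) = f⁺(z)z + a₀ + w f⁻(w), the identity ((r+1/r)/r)·U f(Z,W) U* = U(f⁺(Z)Z + a₀)Z* + W*(W f⁻(W) + a₀)U* + r⁻²·(U f⁺(Z) + f⁻(W) U*) holds. -/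
open ContinuousLinearMap in
/-- If `ZW = WZ = r⁻² I`, `‖Z‖, ‖W‖ ≤ 1` and
`U = (r/(r+1/r))(Z + W*)` is unitary, then for `f(Z,W) = f⁺(Z)Z + a₀ + W f⁻(W)`
(with `f⁺ = p`, `f⁻ = q` polynomials) one has the identity
`((r+1/r)/r) U f(Z,W) U* = U (f⁺(Z)Z + a₀) Z* + W* (W f⁻(W) + a₀) U*
  + r⁻² (U f⁺(Z) + f⁻(W) U*)`. -/
theorem stmt5 (H : Type*) [NormedAddCommGroup H] [InnerProductSpace ℂ H] [CompleteSpace H]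
    (r : ℝ) (hr : 1 < r) (Z W : H →L[ℂ] H)
    (hZW : Z * W = (((r : ℂ)) ^ 2)⁻¹ • (1 : H →L[ℂ] H))
    (hWZ : W * Z = (((r : ℂ)) ^ 2)⁻¹ • (1 : H →L[ℂ] H))
    (hZ : ‖Z‖ ≤ 1) (hW : ‖W‖ ≤ 1)
    (U : H →L[ℂ] H)
    (hU : U = ((r / (r + 1 / r) : ℝ) : ℂ) • (Z + adjoint W))
    (hUl : adjoint U * U = 1) (hUr : U * adjoint U = 1)
    (p q : Polynomial ℂ) (a₀ : ℂ) :
    (((r + 1 / r) / r : ℝ) : ℂ) •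
        (U * (Polynomial.aeval Z p * Z + a₀ • 1 + W * Polynomial.aeval W q) * adjoint U)
      = U * (Polynomial.aeval Z p * Z + a₀ • 1) * adjoint Z
        + adjoint W * (W * Polynomial.aeval W q + a₀ • 1) * adjoint U
        + (((r : ℂ)) ^ 2)⁻¹ •
            (U * Polynomial.aeval Z p + Polynomial.aeval W q * adjoint U) := by
  have hr0 : (r : ℝ) ≠ 0 := by positivity
  have hr1 : (r + 1 / r : ℝ) ≠ 0 := by positivity
  simp only [← ContinuousLinearMap.star_eq_adjoint] at hU ⊢
  set A := star Z with hA
  set B := star W with hB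
  set P := Polynomial.aeval Z p with hP
  set Q := Polynomial.aeval W q with hQ
  set t : ℂ := (((r : ℂ)) ^ 2)⁻¹ with ht
  set c : ℂ := ((r / (r + 1 / r) : ℝ) : ℂ) with hc
  set s : ℂ := (((r + 1 / r) / r : ℝ) : ℂ) with hs
  have hsc : s * c = 1 := by
    have h : ((r + 1 / r) / r) * (r / (r + 1 / r)) = (1 : ℝ) := by field_simp
    rw [hs, hc, ← Complex.ofReal_mul, h, Complex.ofReal_one]
  have hcst : star c = c := by rw [hc]; simp [Complex.star_def, Complex.conj_ofReal]
  have htst : star t = t := by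
    rw [ht]; simp [← Complex.ofReal_pow, Complex.star_def, Complex.conj_ofReal]
  -- commutation of polynomial evaluations
  have hcomm : ∀ (X : H →L[ℂ] H) (f : Polynomial ℂ),
      Commute X (Polynomial.aeval X f) := by
    intro X f
    induction f using Polynomial.induction_on' with
    | add f g hf hg => simpa [map_add] using hf.add_right hg
    | monomial n a =>
      rw [Polynomial.aeval_monomial]
      exact (Algebra.commute_algebraMap_right a X).mul_right
        (Commute.pow_right (Commute.refl X) n)
  have hPZ : P * Z = Z * P := (hcomm Z p).symm
  have hQW : Q * W = W * Q := (hcomm W q).symm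
  -- adjoint of U
  have hadjU : star U = c • (A + W) := by
    rw [hU, star_smul, star_add, star_star, hcst]
  -- B * A = t • 1
  have hBA : B * A = t • (1 : H →L[ℂ] H) := by
    have h := congrArg star hZW
    rw [star_mul, star_smul, star_one, htst] at h
    exact h
  -- U * W = B * star U
  have hUW : U * W = B * star U := by
    rw [hadjU, hU, smul_mul_assoc, mul_smul_comm, add_mul, mul_add, hZW, hBA]
  -- key: U * W * Q * (A + W) = (t • Q + B * W * Q) * star U
  have hUWQ : U * W * Q * (A + W) = (t • Q + B * W * Q) * star U := by
    have h1 : U * W * Q = c • (t • Q + B * W * Q) := by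
      rw [hU, smul_mul_assoc, smul_mul_assoc]
      congr 1
      rw [add_mul, add_mul, hZW, smul_mul_assoc, one_mul, mul_assoc]
    rw [h1, smul_mul_assoc, hadjU, mul_smul_comm]
  -- rewrite LHS scalar into (A + W)
  have hscal : s • star U = A + W := by
    rw [hadjU, smul_smul, hsc, one_smul]
  calc s • (U * (P * Z + a₀ • 1 + W * Q) * star U)
      = U * (P * Z + a₀ • 1 + W * Q) * (s • star U) := by
        rw [mul_smul_comm]
    _ = U * (P * Z + a₀ • 1 + W * Q) * (A + W) := by rw [hscal]
    _ = U * (P * Z + a₀ • 1) * A + (U * (P * (Z * W)) + (a₀ • (U * W)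
          + U * W * Q * (A + W))) := by
        simp only [mul_add, add_mul, mul_one, smul_mul_assoc, one_mul, mul_smul_comm,
          mul_assoc]
        abel
    _ = U * (P * Z + a₀ • 1) * A + B * (W * Q + a₀ • 1) * star U
        + t • (U * P + Q * star U) := by
        rw [hZW, hUWQ, hUW]
        simp only [mul_add, add_mul, mul_one, smul_mul_assoc, one_mul, mul_smul_comm,
          smul_add, mul_assoc]
        abel
end

section
/- Let (Z,W) be in the quantum conservative hyperbola of type r > 1 on a Hilbert space H: ZW = WZ = r⁻²I, ‖Z‖ < 1, ‖W‖ < 1. Let Z = UA be the polar decomposition (U unitary, A positive), Â = r⁻²A⁻¹ so that W = ÂU*, and set H₀ = U·((1 + r⁻²)²I − (A + Â)²)^{1/2}. Define on H ⊕ H the operators Ẑ = [[Z, H₀],[0, W*]] and Ŵ = [[W, −H₀*],[0, Z*]]. Then Ẑ Ŵ = Ŵ Ẑ = r⁻²·I (on H ⊕ H). -/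
/-!
Both block products are upper triangular. Their diagonal entries are `ZW`, `WZ` and their
adjoints, all equal to `r⁻² I`; the off-diagonal entries vanish because `Z = UA` and
`W = r⁻² A⁻¹ U*` interact with `H₀ = US` only through `U*U = I` and the commutation of the
self-adjoint operators `A`, `A⁻¹` with `S`.
-/

open ContinuousLinearMap

variable {H : Type*} [NormedAddCommGroup H] [InnerProductSpace ℂ H] [CompleteSpace H]

/-- The block operator `[[A, B],[C, D]]` acting on the Hilbert-space direct sum
`H ⊕ H = WithLp 2 (H × H)`. -/
noncomputable def blockOp (A B C D : H →L[ℂ] H) :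
    WithLp 2 (H × H) →L[ℂ] WithLp 2 (H × H) :=
  ((WithLp.prodContinuousLinearEquiv 2 ℂ H H).symm : H × H →L[ℂ] WithLp 2 (H × H)) ∘L
    ((A ∘L fst ℂ H H + B ∘L snd ℂ H H).prod (C ∘L fst ℂ H H + D ∘L snd ℂ H H)) ∘L
    ((WithLp.prodContinuousLinearEquiv 2 ℂ H H) : WithLp 2 (H × H) →L[ℂ] H × H)

section StarRing

variable {R : Type*} [Ring R] [StarRing R] {U A S : R}

lemma mul_mul_star_mul_eq_of_commute (hA : IsSelfAdjoint A) (hS : IsSelfAdjoint S)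
    (hSA : Commute S A) : U * A * star (U * S) = U * S * star (U * A) := by
  rw [star_mul, star_mul, hA.star_eq, hS.star_eq, mul_assoc, ← mul_assoc A, ← hSA.eq,
    mul_assoc, mul_assoc]

lemma mul_star_mul_mul_eq_of_commute (hU : star U * U = 1) (hA : IsSelfAdjoint A)
    (hS : IsSelfAdjoint S) (hSA : Commute S A) :
    A * star U * (U * S) = star (U * S) * star (A * star U) := by
  rw [star_mul, star_mul, star_star, hA.star_eq, hS.star_eq, mul_assoc, ← mul_assoc (star U),
    hU, one_mul, mul_assoc, ← mul_assoc (star U), hU, one_mul, hSA.eq]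

end StarRing

omit [CompleteSpace H] in
lemma blockOp_mul (A B C D A' B' C' D' : H →L[ℂ] H) :
    blockOp A B C D * blockOp A' B' C' D' =
      blockOp (A * A' + B * C') (A * B' + B * D') (C * A' + D * C') (C * B' + D * D') := by
  ext x
  simp [blockOp, map_add, add_comm, add_left_comm, add_assoc]

omit [CompleteSpace H] in
lemma blockOp_smul_one (c : ℂ) :
    blockOp (c • 1) 0 0 (c • 1) = c • (1 : WithLp 2 (H × H) →L[ℂ] WithLp 2 (H × H)) := by
  ext x
  simp [blockOp]
  rfl

lemma blockOp_mul_blockOp_eq_smul_one {X Y K : H →L[ℂ] H} {c : ℂ} (hc : IsSelfAdjoint c)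
    (hXY : X * Y = c • 1) (hXK : X * star K = K * star X) :
    blockOp X K 0 (star Y) * blockOp Y (-star K) 0 (star X) = c • 1 := by
  have hYX : star Y * star X = c • 1 := by
    rw [← star_mul, hXY, star_smul, star_one, hc.star_eq]
  rw [blockOp_mul, ← blockOp_smul_one]
  congr 1 <;> simp [hXY, hXK, hYX]

theorem stmt8_general (r : ℝ) (Z W U A S : H →L[ℂ] H)
    (hZW : Z * W = (((r : ℂ)) ^ 2)⁻¹ • (1 : H →L[ℂ] H))
    (hWZ : W * Z = (((r : ℂ)) ^ 2)⁻¹ • (1 : H →L[ℂ] H))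
    (hUl : adjoint U * U = 1)
    (hA : A.IsPositive) (hAunit : IsUnit A) (hpolar : Z = U * A)
    (hpolarW : W = ((((r ^ 2)⁻¹ : ℝ) : ℂ) • Ring.inverse A) * adjoint U)
    (hS : S.IsPositive)
    (hSA : Commute S A) :
    blockOp Z (U * S) 0 (adjoint W) * blockOp W (-(adjoint (U * S))) 0 (adjoint Z)
        = (((r : ℂ)) ^ 2)⁻¹ • (1 : WithLp 2 (H × H) →L[ℂ] WithLp 2 (H × H)) ∧
    blockOp W (-(adjoint (U * S))) 0 (adjoint Z) * blockOp Z (U * S) 0 (adjoint W)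
        = (((r : ℂ)) ^ 2)⁻¹ • (1 : WithLp 2 (H × H) →L[ℂ] WithLp 2 (H × H)) := by
  simp only [← star_eq_adjoint] at hUl hpolarW ⊢
  have hc : IsSelfAdjoint (((r : ℂ)) ^ 2)⁻¹ := by simp [isSelfAdjoint_iff]
  have hÂ : IsSelfAdjoint ((((r ^ 2)⁻¹ : ℝ) : ℂ) • Ring.inverse A) :=
    .smul ((Complex.im_eq_zero_iff_isSelfAdjoint _).mp rfl) hA.isSelfAdjoint.ringInverse
  have hSÂ : Commute S ((((r ^ 2)⁻¹ : ℝ) : ℂ) • Ring.inverse A) := by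
    obtain ⟨u, rfl⟩ := hAunit
    exact (Ring.inverse_unit u ▸ hSA.units_inv_right).smul_right _
  have hWUS : W * (U * S) = star (U * S) * star W :=
    hpolarW ▸ mul_star_mul_mul_eq_of_commute hUl hÂ hS.isSelfAdjoint hSÂ
  have hZUS : Z * star (U * S) = U * S * star Z :=
    hpolar ▸ mul_mul_star_mul_eq_of_commute hA.isSelfAdjoint hS.isSelfAdjoint hSA
  refine ⟨blockOp_mul_blockOp_eq_smul_one hc hZW hZUS, ?_⟩
  -- `Ŵ Ẑ` has the shape of `Ẑ Ŵ` with `(Z, W, H₀)` replaced by `(W, Z, -H₀*)`.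
  simpa using blockOp_mul_blockOp_eq_smul_one (K := -star (U * S)) hc hWZ (by simp [hWUS])

/-- With `(Z,W)` in the quantum conservative hyperbola of type `r > 1`,
`Z = UA` the polar decomposition, `Â = r⁻²A⁻¹` (so `W = ÂU*`), `S` the positive square
root of `(1+r⁻²)²I − (A+Â)²` (which commutes with `A` and `Â`), and `H₀ = U S`, the block
operators `Ẑ = [[Z, H₀],[0, W*]]` and `Ŵ = [[W, −H₀*],[0, Z*]]` on `H ⊕ H` satisfy
`Ẑ Ŵ = Ŵ Ẑ = r⁻² I`. -/
theorem stmt8 (r : ℝ) (hr : 1 < r) (Z W U A S : H →L[ℂ] H)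
    (hZW : Z * W = (((r : ℂ)) ^ 2)⁻¹ • (1 : H →L[ℂ] H))
    (hWZ : W * Z = (((r : ℂ)) ^ 2)⁻¹ • (1 : H →L[ℂ] H))
    (hZ : ‖Z‖ < 1) (hW : ‖W‖ < 1)
    (hUl : adjoint U * U = 1) (hUr : U * adjoint U = 1)
    (hA : A.IsPositive) (hAunit : IsUnit A) (hpolar : Z = U * A)
    (hpolarW : W = ((((r ^ 2)⁻¹ : ℝ) : ℂ) • Ring.inverse A) * adjoint U)
    (hS : S.IsPositive)
    (hSsq : S ^ 2 = (((1 + (r ^ 2)⁻¹) ^ 2 : ℝ) : ℂ) • (1 : H →L[ℂ] H)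
      - (A + (((r ^ 2)⁻¹ : ℝ) : ℂ) • Ring.inverse A) ^ 2)
    (hSA : Commute S A) :
    blockOp Z (U * S) 0 (adjoint W) * blockOp W (-(adjoint (U * S))) 0 (adjoint Z)
        = (((r : ℂ)) ^ 2)⁻¹ • (1 : WithLp 2 (H × H) →L[ℂ] WithLp 2 (H × H)) ∧
    blockOp W (-(adjoint (U * S))) 0 (adjoint Z) * blockOp Z (U * S) 0 (adjoint W)
        = (((r : ℂ)) ^ 2)⁻¹ • (1 : WithLp 2 (H × H) →L[ℂ] WithLp 2 (H × H)) :=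
  stmt8_general r Z W U A S hZW hWZ hUl hA hAunit hpolar hpolarW hS hSA
end

section
/- With the dilation Ẑ, Ŵ on H ⊕ H as above, one has ‖Ẑ‖ ≤ 1 and ‖Ŵ‖ ≤ 1 (indeed ‖Ẑ‖ = ‖Ŵ‖ = 1 when Z ≠ 0). -/
/-!
With `Â = r⁻² A⁻¹` the polar decompositions give `Ẑ = (U ⊕ U) [[A, S], [0, Â]]` and
`Ŵ = [[Â, -S], [0, A]] (U* ⊕ U*)`, so it suffices to bound `M = [[B, S], [0, C]]` for self-adjoint
`B, S, C` with `S B = B S`, `C B = ρ`, `B² + S² + C² = 1 + ρ²` and `‖C‖ < 1`. Then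
`1 - M* M = [[1 - B², -B S], [-S B, R]]` with `R = B² - ρ²`, and `(S B)² = (1 - B²) R`, so the
Schur complement vanishes and the form of `1 - M* M` is the perfect square
`⟪R (y - R⁻¹ S B x), y - R⁻¹ S B x⟫`. Since `ρ ‖z‖ = ‖C B z‖ ≤ ‖C‖ ‖B z‖`, `R` is coercive, hence
invertible and positive: `‖M‖ ≤ 1`, with equality attained at `y = R⁻¹ S B x`.
-/

open ContinuousLinearMap

variable {H : Type*} [NormedAddCommGroup H] [InnerProductSpace ℂ H] [CompleteSpace H]

theorem Commute.ringInverse_right {M₀ : Type*} [MonoidWithZero M₀] {a b : M₀} (h : Commute a b) :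
    Commute a (Ring.inverse b) := by
  by_cases hb : IsUnit b
  · rw [Ring.inverse_of_isUnit hb]
    exact Commute.units_inv_right (by rwa [hb.unit_spec])
  · rw [Ring.inverse_non_unit _ hb]
    exact Commute.zero_right a

section BlockOp

variable {E : Type*} [NormedAddCommGroup E] [InnerProductSpace ℂ E]
  (A B C D : E →L[ℂ] E) (v : WithLp 2 (E × E))

theorem blockOp_apply :
    blockOp A B C D v = WithLp.toLp 2 (A v.fst + B v.snd, C v.fst + D v.snd) :=
  rfl

theorem norm_blockOp_apply_sq :
    ‖blockOp A B C D v‖ ^ 2 = ‖A v.fst + B v.snd‖ ^ 2 + ‖C v.fst + D v.snd‖ ^ 2 :=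
  WithLp.prod_norm_sq_eq_of_L2 _

variable {A B C D} in
theorem norm_blockOp_unitary_mul [CompleteSpace E] {U : E →L[ℂ] E} (hU : U ∈ unitary (E →L[ℂ] E)) :
    ‖blockOp (U * A) (U * B) (U * C) (U * D)‖ = ‖blockOp A B C D‖ := by
  let e := Unitary.linearIsometryEquiv ⟨U, hU⟩
  have he (x : E) : e x = U x := rfl
  have : blockOp (U * A) (U * B) (U * C) (U * D) =
      ((LinearIsometryEquiv.withLpProdCongr 2 e e : _ ≃ₗᵢ[ℂ] _) : _ →L[ℂ] _).comp
        (blockOp A B C D) := by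
    ext v
    simp [blockOp_apply, he]
  rw [this, opNorm_linearIsometryEquiv_comp]

variable {A B C D} in
theorem norm_blockOp_mul_unitary [CompleteSpace E] {U : E →L[ℂ] E} (hU : U ∈ unitary (E →L[ℂ] E)) :
    ‖blockOp (A * U) (B * U) (C * U) (D * U)‖ = ‖blockOp A B C D‖ := by
  let e := Unitary.linearIsometryEquiv ⟨U, hU⟩
  have he (x : E) : e x = U x := rfl
  have : blockOp (A * U) (B * U) (C * U) (D * U) =
      (blockOp A B C D).comp
        ((LinearIsometryEquiv.withLpProdCongr 2 e e : _ ≃ₗᵢ[ℂ] _) : _ →L[ℂ] _) := by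
    ext v
    simp [blockOp_apply, he]
  rw [this, opNorm_comp_linearIsometryEquiv]

end BlockOp

section InnerProduct

variable {𝕜 E : Type*} [RCLike 𝕜] [NormedAddCommGroup E] [InnerProductSpace 𝕜 E] [CompleteSpace E]

open RCLike

theorem IsSelfAdjoint.inner_map_left {T : E →L[𝕜] E} (hT : IsSelfAdjoint T) (x y : E) :
    inner 𝕜 (T x) y = inner 𝕜 x (T y) :=
  hT.isSymmetric x y

theorem IsSelfAdjoint.re_inner_sq_apply_self {T : E →L[𝕜] E} (hT : IsSelfAdjoint T) (x : E) :
    re (inner 𝕜 ((T ^ 2) x) x) = ‖T x‖ ^ 2 := by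
  rw [sq, mul_apply_eq_comp, hT.inner_map_left, inner_self_eq_norm_sq]

theorem re_inner_sub_inverse_apply {P R T : E →L[𝕜] E} (hR : IsSelfAdjoint R) (hRu : IsUnit R)
    (hT : IsSelfAdjoint T) (hTR : Commute T R) (hTT : T * T = P * R) (x y : E) :
    re (inner 𝕜 (R (y - Ring.inverse R (T x))) (y - Ring.inverse R (T x))) =
      re (inner 𝕜 (P x) x) - 2 * re (inner 𝕜 (T x) y) + re (inner 𝕜 (R y) y) := by
  set y₀ := Ring.inverse R (T x)
  have hRRi : R * Ring.inverse R = 1 := Ring.mul_inverse_cancel R hRu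
  have hRy₀ : R y₀ = T x := by
    rw [← mul_apply_eq_comp, hRRi, one_apply_eq_self]
  have hTy₀ : T y₀ = P x := by
    rw [← mul_apply_eq_comp, ← mul_apply_eq_comp, mul_assoc, ← hTR.ringInverse_right.eq,
      ← mul_assoc, hTT, mul_assoc, hRRi, mul_one]
  have h₁ : re (inner 𝕜 (R y) y₀) = re (inner 𝕜 (T x) y) := by
    rw [hR.inner_map_left, hRy₀, inner_re_symm]
  have h₂ : re (inner 𝕜 (R y₀) y₀) = re (inner 𝕜 (P x) x) := by
    rw [hRy₀, hT.inner_map_left, hTy₀, inner_re_symm]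
  rw [map_sub, inner_sub_left, inner_sub_right, inner_sub_right, map_sub, map_sub, map_sub,
    h₁, h₂, hRy₀]
  ring

end InnerProduct

section DilationTriple

variable {E : Type*} [NormedAddCommGroup E] [InnerProductSpace ℂ E]

open RCLike

theorem re_inner_ofReal_smul_self (c : ℝ) (z : E) : re (inner ℂ ((c : ℂ) • z) z) = c * ‖z‖ ^ 2 := by
  rw [inner_smul_left, Complex.conj_ofReal, re_to_complex, Complex.re_ofReal_mul, ← re_to_complex,
    inner_self_eq_norm_sq]

noncomputable def shiftedSq (B : E →L[ℂ] E) (ρ : ℝ) : E →L[ℂ] E :=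
  B ^ 2 - ((ρ ^ 2 : ℝ) : ℂ) • 1

variable {B T : E →L[ℂ] E} {ρ : ℝ}

theorem Commute.shiftedSq_right (hTB : Commute T B) : Commute T (shiftedSq B ρ) :=
  (hTB.pow_right 2).sub_right ((Commute.one_right T).smul_right _)

variable [CompleteSpace E]

theorem isSelfAdjoint_shiftedSq (hB : IsSelfAdjoint B) : IsSelfAdjoint (shiftedSq B ρ) :=
  (hB.pow 2).sub (IsSelfAdjoint.smul (Complex.conj_ofReal _) (IsSelfAdjoint.one _))

theorem IsSelfAdjoint.re_inner_shiftedSq_apply (hB : IsSelfAdjoint B) (z : E) :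
    re (inner ℂ (shiftedSq B ρ z) z) = ‖B z‖ ^ 2 - ρ ^ 2 * ‖z‖ ^ 2 := by
  rw [shiftedSq, sub_apply, inner_sub_left, map_sub, hB.re_inner_sq_apply_self, smul_apply,
    one_apply_eq_self, re_inner_ofReal_smul_self]

structure IsDilationTriple (B S C : E →L[ℂ] E) (ρ : ℝ) : Prop where
  pos : 0 < ρ
  isSelfAdjoint_left : IsSelfAdjoint B
  isSelfAdjoint_mid : IsSelfAdjoint S
  isSelfAdjoint_right : IsSelfAdjoint C
  commute : Commute S B
  mul_eq : C * B = (ρ : ℂ) • 1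
  sq_add_sq_add_sq : B ^ 2 + S ^ 2 + C ^ 2 = ((1 + ρ ^ 2 : ℝ) : ℂ) • 1
  norm_lt_one : ‖C‖ < 1

namespace IsDilationTriple

variable {S C : E →L[ℂ] E}

theorem neg (h : IsDilationTriple B S C ρ) : IsDilationTriple B (-S) C ρ where
  __ := h
  isSelfAdjoint_mid := h.isSelfAdjoint_mid.neg
  commute := h.commute.neg_left
  sq_add_sq_add_sq := by rw [neg_sq]; exact h.sq_add_sq_add_sq

theorem one_sub_norm_sq_pos (h : IsDilationTriple B S C ρ) : 0 < 1 - ‖C‖ ^ 2 := by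
  nlinarith [h.norm_lt_one, norm_nonneg C]

theorem mul_self_eq (h : IsDilationTriple B S C ρ) :
    S * B * (S * B) = (1 - B ^ 2) * shiftedSq B ρ := by
  have hS2 : S ^ 2 = ((1 + ρ ^ 2 : ℝ) : ℂ) • 1 - B ^ 2 - C ^ 2 := by
    rw [← h.sq_add_sq_add_sq]; abel
  have hC2B2 : C ^ 2 * B ^ 2 = ((ρ ^ 2 : ℝ) : ℂ) • 1 := by
    rw [sq, sq, mul_assoc, ← mul_assoc C B B, h.mul_eq, smul_mul_assoc, one_mul, mul_smul_comm,
      h.mul_eq, smul_smul, ← Complex.ofReal_mul, ← sq]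
  calc S * B * (S * B) = S ^ 2 * B ^ 2 := by
        rw [sq, sq, mul_assoc, ← mul_assoc B S B, ← h.commute.eq, mul_assoc, mul_assoc]
    _ = ((1 + ρ ^ 2 : ℝ) : ℂ) • B ^ 2 - B ^ 2 * B ^ 2 - ((ρ ^ 2 : ℝ) : ℂ) • 1 := by
        rw [hS2, sub_mul, sub_mul, smul_mul_assoc, one_mul, hC2B2]
    _ = (1 - B ^ 2) * shiftedSq B ρ := by
        rw [shiftedSq, Complex.ofReal_add, Complex.ofReal_one, add_smul, one_smul, mul_sub,
          sub_mul, sub_mul, one_mul, one_mul, mul_smul_comm, mul_one]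
        abel

theorem norm_sq_add_norm_sq_add_norm_sq (h : IsDilationTriple B S C ρ) (z : E) :
    ‖B z‖ ^ 2 + ‖S z‖ ^ 2 + ‖C z‖ ^ 2 = (1 + ρ ^ 2) * ‖z‖ ^ 2 := by
  have := congrArg (fun X : E →L[ℂ] E => re (inner ℂ (X z) z)) h.sq_add_sq_add_sq
  simpa only [add_apply, inner_add_left, map_add, h.isSelfAdjoint_left.re_inner_sq_apply_self,
    h.isSelfAdjoint_mid.re_inner_sq_apply_self, h.isSelfAdjoint_right.re_inner_sq_apply_self,
    smul_apply, one_apply_eq_self, re_inner_ofReal_smul_self] using this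

theorem le_re_inner_shiftedSq_apply (h : IsDilationTriple B S C ρ) (z : E) :
    (1 - ‖C‖ ^ 2) * ρ ^ 2 * ‖z‖ ^ 2 ≤ re (inner ℂ (shiftedSq B ρ z) z) := by
  have hCBz : ρ * ‖z‖ ≤ ‖C‖ * ‖B z‖ := by
    calc ρ * ‖z‖ = ‖(C * B) z‖ := by
          rw [h.mul_eq, smul_apply, one_apply_eq_self, norm_smul, Complex.norm_real,
            Real.norm_of_nonneg h.pos.le]
      _ ≤ ‖C‖ * ‖B z‖ := C.le_opNorm _
  have hBz : ρ * ‖z‖ ≤ ‖B z‖ :=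
    hCBz.trans (mul_le_of_le_one_left (norm_nonneg _) h.norm_lt_one.le)
  have hρz : 0 ≤ ρ * ‖z‖ := mul_nonneg h.pos.le (norm_nonneg z)
  have hB2 := mul_le_mul hBz hBz hρz (norm_nonneg _)
  rw [h.isSelfAdjoint_left.re_inner_shiftedSq_apply]
  nlinarith [mul_le_mul hCBz hCBz hρz (by positivity),
    mul_nonneg h.one_sub_norm_sq_pos.le (sub_nonneg.2 hB2)]

theorem isUnit_shiftedSq (h : IsDilationTriple B S C ρ) : IsUnit (shiftedSq B ρ) := by
  have hc : 0 < (1 - ‖C‖ ^ 2) * ρ ^ 2 := mul_pos h.one_sub_norm_sq_pos (pow_pos h.pos 2)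
  refine isUnit_of_forall_le_norm_inner_map _ (c := ⟨_, hc.le⟩) hc fun z => ?_
  calc ‖z‖ ^ 2 * ((1 - ‖C‖ ^ 2) * ρ ^ 2) ≤ re (inner ℂ (shiftedSq B ρ z) z) := by
        linarith [h.le_re_inner_shiftedSq_apply z]
    _ ≤ _ := re_le_norm _

theorem norm_sq_add_norm_sq_sub_eq (h : IsDilationTriple B S C ρ) (x y : E) :
    ‖x‖ ^ 2 + ‖y‖ ^ 2 - (‖B x + S y‖ ^ 2 + ‖C y‖ ^ 2) =
      re (inner ℂ (shiftedSq B ρ (y - Ring.inverse (shiftedSq B ρ) ((S * B) x)))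
        (y - Ring.inverse (shiftedSq B ρ) ((S * B) x))) := by
  have hB := h.isSelfAdjoint_left
  have hT : IsSelfAdjoint (S * B) := (IsSelfAdjoint.commute_iff h.isSelfAdjoint_mid hB).mp h.commute
  rw [re_inner_sub_inverse_apply (isSelfAdjoint_shiftedSq hB) h.isUnit_shiftedSq hT
      (h.commute.mul_left (Commute.refl B)).shiftedSq_right h.mul_self_eq,
    sub_apply, one_apply_eq_self, inner_sub_left, map_sub, hB.re_inner_sq_apply_self,
    inner_self_eq_norm_sq (𝕜 := ℂ), hB.re_inner_shiftedSq_apply, mul_apply_eq_comp,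
    h.isSelfAdjoint_mid.inner_map_left, norm_add_sq (𝕜 := ℂ)]
  linarith [h.norm_sq_add_norm_sq_add_norm_sq y]

theorem norm_sq_add_norm_sq_le (h : IsDilationTriple B S C ρ) (x y : E) :
    ‖B x + S y‖ ^ 2 + ‖C y‖ ^ 2 ≤ ‖x‖ ^ 2 + ‖y‖ ^ 2 := by
  set d := y - Ring.inverse (shiftedSq B ρ) ((S * B) x)
  have hd : 0 ≤ (1 - ‖C‖ ^ 2) * ρ ^ 2 * ‖d‖ ^ 2 := by
    have := h.one_sub_norm_sq_pos
    positivity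
  linarith [h.norm_sq_add_norm_sq_sub_eq x y, h.le_re_inner_shiftedSq_apply d]

theorem exists_norm_sq_add_norm_sq_eq (h : IsDilationTriple B S C ρ) (x : E) :
    ∃ y, ‖B x + S y‖ ^ 2 + ‖C y‖ ^ 2 = ‖x‖ ^ 2 + ‖y‖ ^ 2 := by
  refine ⟨Ring.inverse (shiftedSq B ρ) ((S * B) x), ?_⟩
  have := h.norm_sq_add_norm_sq_sub_eq x (Ring.inverse (shiftedSq B ρ) ((S * B) x))
  rw [sub_self, map_zero, inner_zero_left, map_zero] at this
  linarith

theorem of_sq_eq (hρ : 0 < ρ) (hB : IsSelfAdjoint B) (hS : IsSelfAdjoint S) (hC : IsSelfAdjoint C)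
    (hSB : Commute S B) (hCB : C * B = (ρ : ℂ) • 1) (hBC : B * C = (ρ : ℂ) • 1)
    (hS2 : S ^ 2 = (((1 + ρ) ^ 2 : ℝ) : ℂ) • 1 - (B + C) ^ 2) (hC1 : ‖C‖ < 1) :
    IsDilationTriple B S C ρ where
  pos := hρ
  isSelfAdjoint_left := hB
  isSelfAdjoint_mid := hS
  isSelfAdjoint_right := hC
  commute := hSB
  mul_eq := hCB
  norm_lt_one := hC1
  sq_add_sq_add_sq := by
    have hBC2 : (B + C) ^ 2 = B ^ 2 + C ^ 2 + ((2 * ρ : ℝ) : ℂ) • 1 := by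
      rw [sq, add_mul, mul_add, mul_add, hBC, hCB, ← sq, ← sq, Complex.ofReal_mul,
        Complex.ofReal_ofNat, two_mul, add_smul]
      abel
    have hscalar : (((1 + ρ) ^ 2 : ℝ) : ℂ) = ((1 + ρ ^ 2 : ℝ) : ℂ) + ((2 * ρ : ℝ) : ℂ) := by
      push_cast; ring
    rw [hS2, hBC2, hscalar, add_smul]
    abel

theorem swap (h : IsDilationTriple B S C ρ) (hBC : B * C = (ρ : ℂ) • 1) (hB1 : ‖B‖ < 1) :
    IsDilationTriple C S B ρ where
  __ := h
  isSelfAdjoint_left := h.isSelfAdjoint_right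
  isSelfAdjoint_right := h.isSelfAdjoint_left
  mul_eq := hBC
  norm_lt_one := hB1
  sq_add_sq_add_sq := by rw [← h.sq_add_sq_add_sq]; abel
  commute := by
    have hB : (S * C - C * S) * B = 0 := by
      rw [sub_mul, mul_assoc, h.mul_eq, mul_assoc, h.commute.eq, ← mul_assoc, h.mul_eq,
        mul_smul_comm, smul_mul_assoc, mul_one, one_mul, sub_self]
    have hρ : (ρ : ℂ) • (S * C - C * S) = 0 := by
      rw [← mul_one (S * C - C * S), ← mul_smul_comm, ← hBC, ← mul_assoc, hB, zero_mul]
    exact sub_eq_zero.1 ((smul_eq_zero.1 hρ).resolve_left (by exact_mod_cast h.pos.ne'))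

theorem norm_blockOp_le_one (h : IsDilationTriple B S C ρ) : ‖blockOp B S 0 C‖ ≤ 1 := by
  refine opNorm_le_bound _ zero_le_one fun v => ?_
  rw [one_mul, ← pow_le_pow_iff_left₀ (norm_nonneg _) (norm_nonneg _) two_ne_zero,
    norm_blockOp_apply_sq, WithLp.prod_norm_sq_eq_of_L2, zero_apply, zero_add]
  exact h.norm_sq_add_norm_sq_le _ _

theorem norm_blockOp_eq_one [Nontrivial E] (h : IsDilationTriple B S C ρ) :
    ‖blockOp B S 0 C‖ = 1 := by
  obtain ⟨x, hx⟩ := exists_ne (0 : E)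
  obtain ⟨y, hy⟩ := h.exists_norm_sq_add_norm_sq_eq x
  set v : WithLp 2 (E × E) := WithLp.toLp 2 (x, y)
  have hv : ‖v‖ ≠ 0 := norm_ne_zero_iff.2 fun hv => hx (congrArg WithLp.fst hv)
  have hMv : ‖blockOp B S 0 C v‖ = ‖v‖ := by
    rw [← sq_eq_sq₀ (norm_nonneg _) (norm_nonneg _), norm_blockOp_apply_sq,
      WithLp.prod_norm_sq_eq_of_L2, zero_apply, zero_add]
    exact hy
  refine le_antisymm h.norm_blockOp_le_one ?_
  calc 1 = ‖blockOp B S 0 C v‖ / ‖v‖ := by rw [hMv, div_self hv]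
    _ ≤ _ := (blockOp B S 0 C).ratio_le_opNorm v

end IsDilationTriple

end DilationTriple

theorem stmt10_general (r : ℝ) (hr : 1 < r) (Z W U A S : H →L[ℂ] H)
    (hZ : ‖Z‖ < 1) (hW : ‖W‖ < 1)
    (hUl : adjoint U * U = 1) (hUr : U * adjoint U = 1)
    (hA : A.IsPositive) (hAunit : IsUnit A) (hpolar : Z = U * A)
    (hpolarW : W = ((((r ^ 2)⁻¹ : ℝ) : ℂ) • Ring.inverse A) * adjoint U)
    (hS : S.IsPositive)
    (hSsq : S ^ 2 = (((1 + (r ^ 2)⁻¹) ^ 2 : ℝ) : ℂ) • (1 : H →L[ℂ] H)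
      - (A + (((r ^ 2)⁻¹ : ℝ) : ℂ) • Ring.inverse A) ^ 2)
    (hSA : Commute S A) :
    ‖blockOp Z (U * S) 0 (adjoint W)‖ ≤ 1 ∧
    ‖blockOp W (-(adjoint (U * S))) 0 (adjoint Z)‖ ≤ 1 ∧
    (Z ≠ 0 →
      ‖blockOp Z (U * S) 0 (adjoint W)‖ = 1 ∧
      ‖blockOp W (-(adjoint (U * S))) 0 (adjoint Z)‖ = 1) := by
  set ρ : ℝ := (r ^ 2)⁻¹
  set Â : H →L[ℂ] H := (ρ : ℂ) • Ring.inverse A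
  have hU : U ∈ unitary (H →L[ℂ] H) := ⟨hUl, hUr⟩
  have hAsa : IsSelfAdjoint A := hA.isSelfAdjoint
  have hÂsa : IsSelfAdjoint Â := .smul (Complex.conj_ofReal ρ) hAsa.ringInverse
  have hÂ : Â = W * U := by rw [hpolarW, mul_assoc, hUl, mul_one]
  have hT : IsDilationTriple A S Â ρ :=
    .of_sq_eq (by positivity) hAsa hS.isSelfAdjoint hÂsa hSA
      (by rw [smul_mul_assoc, Ring.inverse_mul_cancel A hAunit])
      (by rw [mul_smul_comm, Ring.mul_inverse_cancel A hAunit]) hSsq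
      (by rwa [hÂ, CStarRing.norm_mul_mem_unitary _ hU])
  have hT' : IsDilationTriple Â (-S) A ρ :=
    (hT.swap (by rw [mul_smul_comm, Ring.mul_inverse_cancel A hAunit])
      (by rwa [hpolar, CStarRing.norm_mem_unitary_mul _ hU] at hZ)).neg
  have hZblock : blockOp Z (U * S) 0 (adjoint W) = blockOp (U * A) (U * S) (U * 0) (U * Â) := by
    simp only [hpolar, hpolarW, mul_zero, ← star_eq_adjoint, star_mul, star_star, hÂsa.star_eq]
  have hWblock : blockOp W (-(adjoint (U * S))) 0 (adjoint Z) =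
      blockOp (Â * adjoint U) (-S * adjoint U) (0 * adjoint U) (A * adjoint U) := by
    simp only [hpolar, hpolarW, zero_mul, ← star_eq_adjoint, star_mul, hAsa.star_eq,
      hS.isSelfAdjoint.star_eq, neg_mul]
  rw [hZblock, hWblock, norm_blockOp_unitary_mul hU,
    norm_blockOp_mul_unitary (U := adjoint U) (Unitary.star_mem hU)]
  refine ⟨hT.norm_blockOp_le_one, hT'.norm_blockOp_le_one, fun hZ0 => ?_⟩
  obtain ⟨x, hx⟩ := DFunLike.ne_iff.mp hZ0
  have : Nontrivial H := nontrivial_of_ne x 0 fun h => hx (by simp [h])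
  exact ⟨hT.norm_blockOp_eq_one, hT'.norm_blockOp_eq_one⟩

/-- With the dilation `Ẑ = [[Z, H₀],[0, W*]]`, `Ŵ = [[W, −H₀*],[0, Z*]]`
as above, `‖Ẑ‖ ≤ 1` and `‖Ŵ‖ ≤ 1` (indeed `‖Ẑ‖ = ‖Ŵ‖ = 1` when `Z ≠ 0`). -/
theorem stmt10 (r : ℝ) (hr : 1 < r) (Z W U A S : H →L[ℂ] H)
    (hZW : Z * W = (((r : ℂ)) ^ 2)⁻¹ • (1 : H →L[ℂ] H))
    (hWZ : W * Z = (((r : ℂ)) ^ 2)⁻¹ • (1 : H →L[ℂ] H))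
    (hZ : ‖Z‖ < 1) (hW : ‖W‖ < 1)
    (hUl : adjoint U * U = 1) (hUr : U * adjoint U = 1)
    (hA : A.IsPositive) (hAunit : IsUnit A) (hpolar : Z = U * A)
    (hpolarW : W = ((((r ^ 2)⁻¹ : ℝ) : ℂ) • Ring.inverse A) * adjoint U)
    (hS : S.IsPositive)
    (hSsq : S ^ 2 = (((1 + (r ^ 2)⁻¹) ^ 2 : ℝ) : ℂ) • (1 : H →L[ℂ] H)
      - (A + (((r ^ 2)⁻¹ : ℝ) : ℂ) • Ring.inverse A) ^ 2)
    (hSA : Commute S A) :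
    ‖blockOp Z (U * S) 0 (adjoint W)‖ ≤ 1 ∧
    ‖blockOp W (-(adjoint (U * S))) 0 (adjoint Z)‖ ≤ 1 ∧
    (Z ≠ 0 →
      ‖blockOp Z (U * S) 0 (adjoint W)‖ = 1 ∧
      ‖blockOp W (-(adjoint (U * S))) 0 (adjoint Z)‖ = 1) :=
  stmt10_general r hr Z W U A S hZ hW hUl hUr hA hAunit hpolar hpolarW hS hSsq hSA
end
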